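/- Let M be an ergodic row-stochastic matrix, α, ε ∈ (0,1). Then t_mix(L_α(M), ε) ≤ max{ 2·ln(2/ε)/(1-α)², (2/(1-α))·t_mix(M, ε/2) }, where L_α(M) = αI + (1-α)M. -/
import Mathlib


/-- Total-variation distance between distributions on `Fin d`. -/
noncomputable def dTV {d : ℕ} (μ ν : Fin d → ℝ) : ℝ := (1 / 2) * ∑ i, |μ i - ν i|

/-- Mixing time `t_mix(M, ε) = min{ t : max_i ‖M^t(i,·) - π‖_TV ≤ ε }`. -/
noncomputable def mixTime {d : ℕ} (M : Matrix (Fin d) (Fin d) ℝ) (π : Fin d → ℝ)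
    (ε : ℝ) : ℕ :=
  sInf {t : ℕ | ∀ i, dTV (fun j => (M ^ t) i j) π ≤ ε}


lemma mono_aux (f f' : ℝ → ℝ) (hf : ∀ y, HasDerivAt f (f' y) y)
    (hf' : ∀ y, 0 ≤ y → 0 ≤ f' y) {x : ℝ} (hx : 0 ≤ x) : f 0 ≤ f x := by
  have hmono : MonotoneOn f (Set.Ici (0:ℝ)) := by
    apply monotoneOn_of_deriv_nonneg (convex_Ici 0)
    · exact fun y _ => (hf y).continuousAt.continuousWithinAt
    · exact fun y _ => ((hf y).differentiableAt).differentiableWithinAt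
    · intro y hy
      rw [(hf y).deriv]
      exact hf' y (le_of_lt (by simpa using hy))
  exact hmono Set.self_mem_Ici hx hx

lemma expneg_hasDeriv (y : ℝ) : HasDerivAt (fun z : ℝ => Real.exp (-z)) (-Real.exp (-y)) y := by
  simpa using (hasDerivAt_neg y).exp

lemma poly_hasDeriv (a b c e f g h : ℝ) (y : ℝ) :
    HasDerivAt (fun z : ℝ => a + b*z + c*z^2 + e*z^3 + f*z^4 + g*z^5 + h*z^6)
      (b + 2*c*y + 3*e*y^2 + 4*f*y^3 + 5*g*y^4 + 6*h*y^5) y := by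
  have hh := ((((((hasDerivAt_const y a).add ((hasDerivAt_const y b).mul (hasDerivAt_id y))).add
      ((hasDerivAt_const y c).mul ((hasDerivAt_id y).pow 2))).add
      ((hasDerivAt_const y e).mul ((hasDerivAt_id y).pow 3))).add
      ((hasDerivAt_const y f).mul ((hasDerivAt_id y).pow 4))).add
      ((hasDerivAt_const y g).mul ((hasDerivAt_id y).pow 5))).add
      ((hasDerivAt_const y h).mul ((hasDerivAt_id y).pow 6))
  exact hh.congr_deriv (by push_cast [id]; ring)

lemma trunc2 {x : ℝ} (hx : 0 ≤ x) : Real.exp (-x) ≤ 1 - x + x^2/2 := by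
  have h := mono_aux
    (fun z => 1 + (-1)*z + (1/2)*z^2 + 0*z^3 + 0*z^4 + 0*z^5 + 0*z^6 - Real.exp (-z))
    (fun y => ((-1) + 2*(1/2)*y + 3*0*y^2 + 4*0*y^3 + 5*0*y^4 + 6*0*y^5) - (-Real.exp (-y)))
    (fun y => (poly_hasDeriv 1 (-1) (1/2) 0 0 0 0 y).sub (expneg_hasDeriv y))
    (fun y hy => by
      have := Real.add_one_le_exp (-y); nlinarith)
    hx
  norm_num at h
  nlinarith [h]

lemma trunc3 {x : ℝ} (hx : 0 ≤ x) : 1 - x + x^2/2 - x^3/6 ≤ Real.exp (-x) := by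
  have h := mono_aux
    (fun z => (-1) + 1*z + (-(1/2))*z^2 + (1/6)*z^3 + 0*z^4 + 0*z^5 + 0*z^6 + Real.exp (-z))
    (fun y => (1 + 2*(-(1/2))*y + 3*(1/6)*y^2 + 4*0*y^3 + 5*0*y^4 + 6*0*y^5) + (-Real.exp (-y)))
    (fun y => (poly_hasDeriv (-1) 1 (-(1/2)) (1/6) 0 0 0 y).add (expneg_hasDeriv y))
    (fun y hy => by
      have := trunc2 hy; nlinarith)
    hx
  norm_num at h
  nlinarith [h]

lemma trunc4 {x : ℝ} (hx : 0 ≤ x) : Real.exp (-x) ≤ 1 - x + x^2/2 - x^3/6 + x^4/24 := by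
  have h := mono_aux
    (fun z => 1 + (-1)*z + (1/2)*z^2 + (-(1/6))*z^3 + (1/24)*z^4 + 0*z^5 + 0*z^6 - Real.exp (-z))
    (fun y => ((-1) + 2*(1/2)*y + 3*(-(1/6))*y^2 + 4*(1/24)*y^3 + 5*0*y^4 + 6*0*y^5) - (-Real.exp (-y)))
    (fun y => (poly_hasDeriv 1 (-1) (1/2) (-(1/6)) (1/24) 0 0 y).sub (expneg_hasDeriv y))
    (fun y hy => by
      have := trunc3 hy; nlinarith)
    hx
  norm_num at h
  nlinarith [h]

lemma trunc5 {x : ℝ} (hx : 0 ≤ x) : 1 - x + x^2/2 - x^3/6 + x^4/24 - x^5/120 ≤ Real.exp (-x) := by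
  have h := mono_aux
    (fun z => (-1) + 1*z + (-(1/2))*z^2 + (1/6)*z^3 + (-(1/24))*z^4 + (1/120)*z^5 + 0*z^6 + Real.exp (-z))
    (fun y => (1 + 2*(-(1/2))*y + 3*(1/6)*y^2 + 4*(-(1/24))*y^3 + 5*(1/120)*y^4 + 6*0*y^5) + (-Real.exp (-y)))
    (fun y => (poly_hasDeriv (-1) 1 (-(1/2)) (1/6) (-(1/24)) (1/120) 0 y).add (expneg_hasDeriv y))
    (fun y hy => by
      have := trunc4 hy; nlinarith)
    hx
  norm_num at h
  nlinarith [h]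

lemma trunc6 {x : ℝ} (hx : 0 ≤ x) :
    Real.exp (-x) ≤ 1 - x + x^2/2 - x^3/6 + x^4/24 - x^5/120 + x^6/720 := by
  have h := mono_aux
    (fun z => 1 + (-1)*z + (1/2)*z^2 + (-(1/6))*z^3 + (1/24)*z^4 + (-(1/120))*z^5 + (1/720)*z^6 - Real.exp (-z))
    (fun y => ((-1) + 2*(1/2)*y + 3*(-(1/6))*y^2 + 4*(1/24)*y^3 + 5*(-(1/120))*y^4 + 6*(1/720)*y^5) - (-Real.exp (-y)))
    (fun y => (poly_hasDeriv 1 (-1) (1/2) (-(1/6)) (1/24) (-(1/120)) (1/720) y).sub (expneg_hasDeriv y))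
    (fun y hy => by
      have := trunc5 hy; nlinarith)
    hx
  norm_num at h
  nlinarith [h]



lemma dTV_nonneg {d : ℕ} (μ ν : Fin d → ℝ) : 0 ≤ dTV μ ν := by
  unfold dTV
  positivity

lemma dTV_le_one {d : ℕ} (μ ν : Fin d → ℝ) (hμ0 : ∀ i, 0 ≤ μ i) (hμ1 : ∑ i, μ i = 1)
    (hν0 : ∀ i, 0 ≤ ν i) (hν1 : ∑ i, ν i = 1) : dTV μ ν ≤ 1 := by
  unfold dTV
  have h : ∑ i, |μ i - ν i| ≤ ∑ i, (μ i + ν i) := by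
    apply Finset.sum_le_sum
    intro i _
    rw [abs_sub_le_iff]
    constructor <;> nlinarith [hμ0 i, hν0 i]
  rw [Finset.sum_add_distrib, hμ1, hν1] at h
  linarith

lemma dTV_mix {d : ℕ} {ι : Type*} (s : Finset ι) (w : ι → ℝ) (μ : ι → Fin d → ℝ)
    (π : Fin d → ℝ) (hw : ∀ k ∈ s, 0 ≤ w k) (hw1 : ∑ k ∈ s, w k = 1) :
    dTV (fun j => ∑ k ∈ s, w k * μ k j) π ≤ ∑ k ∈ s, w k * dTV (μ k) π := by
  unfold dTV
  have key : ∀ j, |(∑ k ∈ s, w k * μ k j) - π j| ≤ ∑ k ∈ s, w k * |μ k j - π j| := by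
    intro j
    have h1 : (∑ k ∈ s, w k * μ k j) - π j = ∑ k ∈ s, w k * (μ k j - π j) := by
      rw [Finset.sum_congr rfl (fun k _ => mul_sub (w k) (μ k j) (π j)),
        Finset.sum_sub_distrib, ← Finset.sum_mul, hw1, one_mul]
    rw [h1]
    refine (Finset.abs_sum_le_sum_abs _ _).trans (Finset.sum_le_sum fun k hk => ?_)
    rw [abs_mul, abs_of_nonneg (hw k hk)]
  calc (1/2 : ℝ) * ∑ j, |(∑ k ∈ s, w k * μ k j) - π j|
      ≤ (1/2 : ℝ) * ∑ j, ∑ k ∈ s, w k * |μ k j - π j| := by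
        apply mul_le_mul_of_nonneg_left (Finset.sum_le_sum fun j _ => key j) (by norm_num)
    _ = ∑ k ∈ s, w k * ((1/2 : ℝ) * ∑ j, |μ k j - π j|) := by
        have hcomm : ∑ j, ∑ k ∈ s, w k * |μ k j - π j| = ∑ k ∈ s, ∑ j, w k * |μ k j - π j| :=
          Finset.sum_comm
        rw [hcomm]
        simp only [Finset.mul_sum]
        refine Finset.sum_congr rfl fun k _ => ?_
        refine Finset.sum_congr rfl fun j _ => ?_
        ring
  
section Stoch
variable {d : ℕ} (M : Matrix (Fin d) (Fin d) ℝ)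

lemma pow_nonneg_entries (hM1 : ∀ i j, 0 ≤ M i j) (n : ℕ) : ∀ i j, 0 ≤ (M ^ n) i j := by
  induction n with
  | zero => intro i j; simp [Matrix.one_apply]; split <;> norm_num
  | succ n ih =>
      intro i j
      rw [pow_succ, Matrix.mul_apply]
      exact Finset.sum_nonneg fun k _ => mul_nonneg (ih i k) (hM1 k j)

lemma pow_row_sum (hM2 : ∀ i, ∑ j, M i j = 1) (n : ℕ) : ∀ i, ∑ j, (M ^ n) i j = 1 := by
  induction n with
  | zero => intro i; simp [Matrix.one_apply]
  | succ n ih =>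
      intro i
      rw [Finset.sum_congr rfl fun j _ => by rw [pow_succ, Matrix.mul_apply]]
      rw [Finset.sum_comm]
      rw [Finset.sum_congr rfl fun k _ => by rw [← Finset.mul_sum, hM2 k, mul_one]]
      exact ih i
end Stoch

lemma stat_pow {d : ℕ} (M : Matrix (Fin d) (Fin d) ℝ) (π : Fin d → ℝ)
    (hstat : ∀ j, ∑ i, π i * M i j = π j) (n : ℕ) : ∀ j, ∑ i, π i * (M ^ n) i j = π j := by
  induction n with
  | zero => intro j; simp [Matrix.one_apply]
  | succ n ih =>
      intro j
      rw [Finset.sum_congr rfl fun i _ => by rw [pow_succ, Matrix.mul_apply, Finset.mul_sum]]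
      have hcomm : ∑ i, ∑ k, π i * ((M ^ n) i k * M k j)
          = ∑ k, ∑ i, π i * ((M ^ n) i k * M k j) := Finset.sum_comm
      rw [hcomm]
      rw [Finset.sum_congr rfl fun k _ => by
        rw [Finset.sum_congr rfl fun i _ => (mul_assoc (π i) _ _).symm, ← Finset.sum_mul, ih k]]
      exact hstat j

lemma dTV_pow_mono {d : ℕ} (M : Matrix (Fin d) (Fin d) ℝ) (π : Fin d → ℝ) (c : ℝ)
    (hM1 : ∀ i j, 0 ≤ M i j) (hM2 : ∀ i, ∑ j, M i j = 1)
    {t u : ℕ} (htu : t ≤ u) (h : ∀ i, dTV (fun j => (M ^ t) i j) π ≤ c) :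
    ∀ i, dTV (fun j => (M ^ u) i j) π ≤ c := by
  induction u, htu using Nat.le_induction with
  | base => exact h
  | succ u htu ih =>
      intro i
      have hrow : (fun j => (M ^ (u+1)) i j) = fun j => ∑ k, M i k * (M ^ u) k j := by
        funext j; rw [pow_succ', Matrix.mul_apply]
      rw [hrow]
      have hc0 : 0 ≤ c := le_trans (dTV_nonneg _ _) (ih i)
      calc dTV (fun j => ∑ k, M i k * (M ^ u) k j) π
          ≤ ∑ k, M i k * dTV (fun j => (M ^ u) k j) π :=
            dTV_mix Finset.univ (fun k => M i k) (fun k j => (M ^ u) k j) π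
              (fun k _ => hM1 i k) (hM2 i)
        _ ≤ ∑ k, M i k * c := Finset.sum_le_sum fun k _ =>
            mul_le_mul_of_nonneg_left (ih k) (hM1 i k)
        _ = c := by rw [← Finset.sum_mul, hM2 i, one_mul]

lemma doeblin_step {d : ℕ} (R : Matrix (Fin d) (Fin d) ℝ) (π : Fin d → ℝ) (δ : ℝ)
    (hδ0 : 0 ≤ δ) (hR0 : ∀ i j, δ * π j ≤ R i j) (hR1 : ∀ i, ∑ j, R i j = 1)
    (hstatR : ∀ j, ∑ i, π i * R i j = π j) (hπ1 : ∑ i, π i = 1)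
    (ν : Fin d → ℝ) (hν1 : ∑ l, ν l = 1) :
    dTV (fun j => ∑ l, ν l * R l j) π ≤ (1 - δ) * dTV ν π := by
  unfold dTV
  have key : ∀ j, (∑ l, ν l * R l j) - π j = ∑ l, (ν l - π l) * (R l j - δ * π j) := by
    intro j
    have expand : ∑ l, (ν l - π l) * (R l j - δ * π j)
        = (∑ l, ν l * R l j) - (δ * π j) * (∑ l, ν l)
          - (∑ l, π l * R l j) + (δ * π j) * (∑ l, π l) := by
      rw [Finset.sum_congr rfl fun l (_ : l ∈ Finset.univ) => show
        (ν l - π l) * (R l j - δ * π j)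
          = ν l * R l j - (δ * π j) * ν l - π l * R l j + (δ * π j) * π l by ring]
      simp [Finset.sum_add_distrib, Finset.sum_sub_distrib, Finset.mul_sum]
    rw [expand, hν1, hπ1, hstatR j]
    ring
  have hbound : ∀ j, |(∑ l, ν l * R l j) - π j| ≤ ∑ l, |ν l - π l| * (R l j - δ * π j) := by
    intro j
    rw [key j]
    refine (Finset.abs_sum_le_sum_abs _ _).trans (Finset.sum_le_sum fun l _ => ?_)
    rw [abs_mul, abs_of_nonneg (show (0:ℝ) ≤ R l j - δ * π j by linarith [hR0 l j])]
  calc (1/2 : ℝ) * ∑ j, |(∑ l, ν l * R l j) - π j|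
      ≤ (1/2 : ℝ) * ∑ j, ∑ l, |ν l - π l| * (R l j - δ * π j) :=
        mul_le_mul_of_nonneg_left (Finset.sum_le_sum fun j _ => hbound j) (by norm_num)
    _ = (1/2 : ℝ) * ∑ l, |ν l - π l| * (1 - δ) := by
        have hcomm : ∑ j, ∑ l, |ν l - π l| * (R l j - δ * π j)
            = ∑ l, ∑ j, |ν l - π l| * (R l j - δ * π j) := Finset.sum_comm
        rw [hcomm]
        congr 1
        refine Finset.sum_congr rfl fun l _ => ?_
        rw [← Finset.mul_sum]
        congr 1
        rw [Finset.sum_sub_distrib, hR1 l, ← Finset.mul_sum, hπ1, mul_one]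
    _ = (1 - δ) * ((1/2 : ℝ) * ∑ l, |ν l - π l|) := by
        rw [Finset.sum_congr rfl fun l (_ : l ∈ Finset.univ) =>
          mul_comm (|ν l - π l|) (1 - δ), ← Finset.mul_sum]
        ring

lemma lazy_expand {d : ℕ} (M : Matrix (Fin d) (Fin d) ℝ) (α : ℝ) (t : ℕ) (i j : Fin d) :
    ((α • (1 : Matrix (Fin d) (Fin d) ℝ) + (1 - α) • M) ^ t) i j
      = ∑ k ∈ Finset.range (t+1), ((t.choose k : ℝ) * (1-α)^k * α^(t-k)) * (M ^ k) i j := by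
  have hc : Commute ((1-α) • M) (α • (1 : Matrix (Fin d) (Fin d) ℝ)) :=
    ((Commute.one_right ((1-α) • M)).smul_right α)
  rw [add_comm (α • (1 : Matrix (Fin d) (Fin d) ℝ))]
  rw [hc.add_pow t]
  rw [Matrix.sum_apply]
  refine Finset.sum_congr rfl fun k hk => ?_
  have h1 : ((1-α) • M) ^ k = (1-α)^k • M ^ k := smul_pow _ _ _
  have h2 : (α • (1 : Matrix (Fin d) (Fin d) ℝ)) ^ (t-k) = α^(t-k) • (1 : Matrix (Fin d) (Fin d) ℝ) := by
    rw [smul_pow, one_pow]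
  rw [h1, h2]
  have h3 : ((1-α)^k • M ^ k) * (α^(t-k) • (1 : Matrix (Fin d) (Fin d) ℝ))
      = ((1-α)^k * α^(t-k)) • M ^ k := by
    rw [smul_mul_assoc, mul_smul_comm, mul_one, smul_smul]
  rw [h3]
  have h4 : (((1-α)^k * α^(t-k)) • M ^ k * (t.choose k : Matrix (Fin d) (Fin d) ℝ)) i j
      = (t.choose k : ℝ) * (((1-α)^k * α^(t-k)) • M ^ k) i j := by
    rw [← Matrix.diagonal_natCast, Matrix.mul_apply]
    simp [Matrix.diagonal_apply, mul_comm]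
  rw [h4, Matrix.smul_apply]
  simp only [smul_eq_mul]
  ring

lemma keyIneq {p : ℝ} (h0 : 0 ≤ p) (h1 : p ≤ 1) :
    1 - p + p * Real.exp (-(2*p)) ≤ Real.exp (-(3*p^2/2)) := by
  have hE := trunc6 (show (0:ℝ) ≤ 2*p by linarith)
  have hO := trunc5 (show (0:ℝ) ≤ 3*p^2/2 by positivity)
  nlinarith [sq_nonneg p, sq_nonneg (p-1/2), sq_nonneg (p-3/5), mul_nonneg h0 h0,
    sq_nonneg (p*(p-3/5)), mul_nonneg (mul_nonneg h0 h0) h0, sq_nonneg (p^2*(p-3/5)),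
    sq_nonneg (p^3*(p-3/5)), sq_nonneg (p^4*(p-3/5)), mul_nonneg h0 (sub_nonneg.2 h1),
    sq_nonneg (p*(1-p))]

lemma chernoff {p : ℝ} (hp : 0 < p) (hp1 : p < 1) (t₀ n : ℕ) (ht₀ : 1 ≤ t₀) :
    ∑ k ∈ Finset.range t₀, (n.choose k : ℝ) * p^k * (1-p)^(n-k)
      ≤ Real.exp (2*p*((t₀:ℝ)-1)) * Real.exp (-(3*p^2/2)) ^ n := by
  set c : ℝ := Real.exp (-(2*p)) with hc
  have hc0 : 0 < c := Real.exp_pos _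
  have step1 : ∑ k ∈ Finset.range t₀, (n.choose k : ℝ) * p^k * (1-p)^(n-k)
      ≤ Real.exp (2*p*((t₀:ℝ)-1)) * ∑ k ∈ Finset.range t₀,
          (n.choose k : ℝ) * (p*c)^k * (1-p)^(n-k) := by
    rw [Finset.mul_sum]
    refine Finset.sum_le_sum fun k hk => ?_
    have hk' : (k:ℝ) ≤ (t₀:ℝ) - 1 := by
      have := Finset.mem_range.1 hk
      have : k ≤ t₀ - 1 := Nat.le_sub_one_of_lt this
      calc (k:ℝ) ≤ ((t₀ - 1 : ℕ) : ℝ) := by exact_mod_cast this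
        _ = (t₀:ℝ) - 1 := by
          have : (1:ℕ) ≤ t₀ := ht₀
          push_cast [Nat.cast_sub this]
          ring
    have hck : c ^ k = Real.exp (-(2*p)*k) := by
      rw [hc, ← Real.exp_nat_mul]
      ring_nf
    have hfac : (1:ℝ) ≤ Real.exp (2*p*((t₀:ℝ)-1)) * c ^ k := by
      rw [hck, ← Real.exp_add]
      have : (0:ℝ) ≤ 2*p*((t₀:ℝ)-1) + -(2*p)*k := by nlinarith
      calc (1:ℝ) = Real.exp 0 := (Real.exp_zero).symm
        _ ≤ _ := Real.exp_le_exp.2 this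
    have hq : (0:ℝ) ≤ 1 - p := by linarith
    have hterm : (0:ℝ) ≤ (n.choose k : ℝ) * p^k * (1-p)^(n-k) :=
      mul_nonneg (mul_nonneg (Nat.cast_nonneg _) (pow_nonneg hp.le _)) (pow_nonneg hq _)
    calc (n.choose k : ℝ) * p^k * (1-p)^(n-k)
        = 1 * ((n.choose k : ℝ) * p^k * (1-p)^(n-k)) := (one_mul _).symm
      _ ≤ (Real.exp (2*p*((t₀:ℝ)-1)) * c ^ k) * ((n.choose k : ℝ) * p^k * (1-p)^(n-k)) :=
          mul_le_mul_of_nonneg_right hfac hterm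
      _ = Real.exp (2*p*((t₀:ℝ)-1)) * ((n.choose k : ℝ) * (p*c)^k * (1-p)^(n-k)) := by
          rw [mul_pow]; ring
  have step2 : ∑ k ∈ Finset.range t₀, (n.choose k : ℝ) * (p*c)^k * (1-p)^(n-k)
      ≤ ∑ k ∈ Finset.range (n+1), (n.choose k : ℝ) * (p*c)^k * (1-p)^(n-k) := by
    have hsub1 : Finset.range t₀ ⊆ Finset.range (max t₀ (n+1)) :=
      Finset.range_subset_range.2 (le_max_left _ _)
    have hsub2 : Finset.range (n+1) ⊆ Finset.range (max t₀ (n+1)) :=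
      Finset.range_subset_range.2 (le_max_right _ _)
    have h1 : ∑ k ∈ Finset.range t₀, (n.choose k : ℝ) * (p*c)^k * (1-p)^(n-k)
        ≤ ∑ k ∈ Finset.range (max t₀ (n+1)), (n.choose k : ℝ) * (p*c)^k * (1-p)^(n-k) := by
      refine Finset.sum_le_sum_of_subset_of_nonneg hsub1 fun k _ _ => ?_
      have hpc : (0:ℝ) ≤ p*c := by positivity
      have hq : (0:ℝ) ≤ 1 - p := by linarith
      exact mul_nonneg (mul_nonneg (Nat.cast_nonneg _) (pow_nonneg hpc _)) (pow_nonneg hq _)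
    have h2 : ∑ k ∈ Finset.range (max t₀ (n+1)), (n.choose k : ℝ) * (p*c)^k * (1-p)^(n-k)
        = ∑ k ∈ Finset.range (n+1), (n.choose k : ℝ) * (p*c)^k * (1-p)^(n-k) := by
      symm
      refine Finset.sum_subset hsub2 fun k _ hk => ?_
      have : n < k := by
        by_contra hle
        exact hk (Finset.mem_range.2 (Nat.lt_succ_of_le (not_lt.1 hle)))
      rw [Nat.choose_eq_zero_of_lt this]
      simp
    linarith
  have step3 : ∑ k ∈ Finset.range (n+1), (n.choose k : ℝ) * (p*c)^k * (1-p)^(n-k)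
      = (p*c + (1-p))^n := by
    rw [add_pow]
    refine Finset.sum_congr rfl fun k _ => ?_
    ring
  have step4 : (p*c + (1-p))^n ≤ Real.exp (-(3*p^2/2)) ^ n := by
    have hq : (0:ℝ) ≤ 1 - p := by linarith
    refine pow_le_pow_left₀ (by positivity) ?_ n
    have := keyIneq hp.le hp1.le
    linarith
  calc ∑ k ∈ Finset.range t₀, (n.choose k : ℝ) * p^k * (1-p)^(n-k)
      ≤ Real.exp (2*p*((t₀:ℝ)-1)) * ∑ k ∈ Finset.range t₀,
          (n.choose k : ℝ) * (p*c)^k * (1-p)^(n-k) := step1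
    _ ≤ Real.exp (2*p*((t₀:ℝ)-1)) * (p*c + (1-p))^n := by
        refine mul_le_mul_of_nonneg_left ?_ (Real.exp_pos _).le
        rw [← step3]; exact step2
    _ ≤ _ := mul_le_mul_of_nonneg_left step4 (Real.exp_pos _).le

-- Doeblin: the mixing set is nonempty at any positive level
lemma exists_mixing {d : ℕ} (hd : 2 ≤ d) (M : Matrix (Fin d) (Fin d) ℝ) (π : Fin d → ℝ)
    (hM1 : ∀ i j, 0 ≤ M i j) (hM2 : ∀ i, ∑ j, M i j = 1)
    (herg : ∃ t : ℕ, ∀ i j, 0 < (M ^ t) i j)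
    (hπ0 : ∀ i, 0 < π i) (hπ1 : ∑ i, π i = 1)
    (hstat : ∀ j, ∑ i, π i * M i j = π j)
    {ε' : ℝ} (hε' : 0 < ε') :
    ∃ T : ℕ, ∀ i, dTV (fun j => (M ^ T) i j) π ≤ ε' := by
  have hdpos : 0 < d := lt_of_lt_of_le (by norm_num) hd
  haveI : NeZero d := ⟨hdpos.ne'⟩
  have : Nonempty (Fin d) := ⟨⟨0, hdpos⟩⟩
  obtain ⟨r, hr⟩ := herg
  obtain ⟨q, hq⟩ := Finite.exists_min (fun q : Fin d × Fin d => (M ^ r) q.1 q.2)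
  set δ : ℝ := (M ^ r) q.1 q.2 with hδdef
  have hδpos : 0 < δ := hr _ _
  have hδmin : ∀ i j, δ ≤ (M ^ r) i j := fun i j => hq (i, j)
  have hπle1 : ∀ j, π j ≤ 1 := by
    intro j
    rw [← hπ1]
    exact Finset.single_le_sum (fun i _ => (hπ0 i).le) (Finset.mem_univ j)
  have hδπ : ∀ i j, δ * π j ≤ (M ^ r) i j := by
    intro i j
    calc δ * π j ≤ δ * 1 := mul_le_mul_of_nonneg_left (hπle1 j) hδpos.le
      _ = δ := mul_one δ
      _ ≤ (M ^ r) i j := hδmin i j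
  have hδ1 : δ ≤ 1 := by
    calc δ ≤ (M ^ r) q.1 q.2 := hδmin _ _
      _ ≤ ∑ j, (M ^ r) q.1 j :=
        Finset.single_le_sum (fun j _ => pow_nonneg_entries M hM1 r q.1 j) (Finset.mem_univ q.2)
      _ = 1 := pow_row_sum M hM2 r q.1
  have hiter : ∀ k : ℕ, ∀ i, dTV (fun j => ((M ^ r) ^ k) i j) π ≤ (1 - δ) ^ k := by
    intro k
    induction k with
    | zero =>
        intro i
        simp only [pow_zero]
        exact dTV_le_one _ _ (fun j => by simp [Matrix.one_apply]; split <;> norm_num)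
          (by simp [Matrix.one_apply]) (fun j => (hπ0 j).le) hπ1
    | succ k ih =>
        intro i
        have hrow : (fun j => ((M ^ r) ^ (k+1)) i j)
            = fun j => ∑ l, ((M ^ r) ^ k) i l * (M ^ r) l j := by
          funext j; rw [pow_succ, Matrix.mul_apply]
        rw [hrow]
        have hν1 : ∑ l, ((M ^ r) ^ k) i l = 1 :=
          pow_row_sum (M ^ r) (pow_row_sum M hM2 r) k i
        calc dTV (fun j => ∑ l, ((M ^ r) ^ k) i l * (M ^ r) l j) π
            ≤ (1 - δ) * dTV (fun l => ((M ^ r) ^ k) i l) π :=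
              doeblin_step (M ^ r) π δ hδpos.le hδπ (pow_row_sum M hM2 r)
                (stat_pow M π hstat r) hπ1 _ hν1
          _ ≤ (1 - δ) * (1 - δ) ^ k :=
              mul_le_mul_of_nonneg_left (ih i) (by linarith)
          _ = (1 - δ) ^ (k+1) := by ring
  obtain ⟨k, hk⟩ := exists_pow_lt_of_lt_one hε' (show 1 - δ < 1 by linarith)
  refine ⟨r * k, fun i => ?_⟩
  have : (M ^ (r * k)) = (M ^ r) ^ k := pow_mul M r k
  rw [this]
  exact le_trans (hiter k i) hk.le

/-- Mixing-time bound for the α-lazy version of an ergodic chain: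
`t_mix(L_α(M), ε) ≤ max{ 2·ln(2/ε)/(1-α)², (2/(1-α))·t_mix(M, ε/2) }`. -/
theorem lazy_mixing_time {d : ℕ} (hd : 2 ≤ d)
    (M : Matrix (Fin d) (Fin d) ℝ) (π : Fin d → ℝ) (α ε : ℝ)
    (hα : α ∈ Set.Ioo (0 : ℝ) 1) (hε : ε ∈ Set.Ioo (0 : ℝ) 1)
    (hM1 : ∀ i j, 0 ≤ M i j) (hM2 : ∀ i, ∑ j, M i j = 1)
    (herg : ∃ t : ℕ, ∀ i j, 0 < (M ^ t) i j)
    (hπ0 : ∀ i, 0 < π i) (hπ1 : ∑ i, π i = 1)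
    (hstat : ∀ j, ∑ i, π i * M i j = π j) :
    (mixTime (α • 1 + (1 - α) • M) π ε : ℝ)
      ≤ max (2 * Real.log (2 / ε) / (1 - α) ^ 2)
          ((2 / (1 - α)) * mixTime M π (ε / 2)) := by
  obtain ⟨hα0, hα1⟩ := hα
  obtain ⟨hε0, hε1⟩ := hε
  have hp0 : (0:ℝ) < 1 - α := by linarith
  have hp1 : 1 - α < 1 := by linarith
  -- the mixing set of M at level ε/2
  set S : Set ℕ := {t : ℕ | ∀ i, dTV (fun j => (M ^ t) i j) π ≤ ε/2} with hSdef
  have hSne : S.Nonempty := exists_mixing hd M π hM1 hM2 herg hπ0 hπ1 hstat (half_pos hε0)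
  set t₀ : ℕ := mixTime M π (ε/2) with ht₀def
  have ht₀mem : t₀ ∈ S := Nat.sInf_mem hSne
  have hmono : ∀ k, t₀ ≤ k → ∀ i, dTV (fun j => (M ^ k) i j) π ≤ ε/2 :=
    fun k hk => dTV_pow_mono M π (ε/2) hM1 hM2 hk ht₀mem
  -- numbers
  set Lg : ℝ := Real.log (2/ε) with hLgdef
  have hLg : 0 < Lg := Real.log_pos (by rw [lt_div_iff₀ hε0]; linarith)
  set A : ℝ := 2 * Lg / (1-α)^2 with hAdef
  set B : ℝ := (2 / (1-α)) * t₀ with hBdef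
  have hA0 : 0 < A := by positivity
  set mx : ℝ := max A B with hmxdef
  have hmx0 : 0 < mx := lt_of_lt_of_le hA0 (le_max_left _ _)
  set n : ℕ := Nat.floor mx with hndef
  have hnle : (n:ℝ) ≤ mx := Nat.floor_le hmx0.le
  have hngt : mx - 1 < (n:ℝ) := by
    have := Nat.lt_floor_add_one mx
    linarith
  have hnA : A - 1 < (n:ℝ) := by
    have : A ≤ mx := le_max_left _ _
    linarith
  have hnB : B - 1 < (n:ℝ) := by
    have : B ≤ mx := le_max_right _ _
    linarith
  -- weights
  set w : ℕ → ℝ := fun k => (n.choose k : ℝ) * (1-α)^k * α^(n-k) with hwdef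
  have hw0 : ∀ k, 0 ≤ w k := fun k =>
    mul_nonneg (mul_nonneg (Nat.cast_nonneg _) (pow_nonneg hp0.le _)) (pow_nonneg hα0.le _)
  have hw1 : ∑ k ∈ Finset.range (n+1), w k = 1 := by
    have h := add_pow (1-α) α n
    rw [show (1-α) + α = 1 by ring, one_pow] at h
    rw [show ∑ k ∈ Finset.range (n+1), w k
        = ∑ k ∈ Finset.range (n+1), (1-α)^k * α^(n-k) * (n.choose k : ℝ) from
      Finset.sum_congr rfl fun k _ => by rw [hwdef]; ring]
    exact h.symm
  -- the tail bound
  have htail : ∑ k ∈ Finset.range t₀, w k ≤ ε/2 := by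
    rcases Nat.eq_zero_or_pos t₀ with h0 | hpos
    · rw [h0]
      simp
      linarith
    · have hch := chernoff hp0 hp1 t₀ n hpos
      have hys : ∀ k, w k = (n.choose k : ℝ) * (1-α)^k * (1-(1-α))^(n-k) := by
        intro k; rw [hwdef]; ring_nf
      calc ∑ k ∈ Finset.range t₀, w k
          = ∑ k ∈ Finset.range t₀, (n.choose k : ℝ) * (1-α)^k * (1-(1-α))^(n-k) :=
            Finset.sum_congr rfl fun k _ => hys k
        _ ≤ Real.exp (2*(1-α)*((t₀:ℝ)-1)) * Real.exp (-(3*(1-α)^2/2)) ^ n := hch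
        _ = Real.exp (2*(1-α)*((t₀:ℝ)-1) + (n:ℝ) * (-(3*(1-α)^2/2))) := by
            rw [← Real.exp_nat_mul, ← Real.exp_add]
        _ ≤ Real.exp (Real.log (ε/2)) := by
            apply Real.exp_le_exp.2
            have hlog : Real.log (ε/2) = -Lg := by
              rw [hLgdef, Real.log_div two_ne_zero (ne_of_gt hε0),
                Real.log_div (ne_of_gt hε0) two_ne_zero]
              ring
            rw [hlog]
            -- key arithmetic
            have e1 : (1-α)^2 * A = 2 * Lg := by
              rw [hAdef]; field_simp
            have e2 : (1-α) * B = 2 * (t₀:ℝ) := by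
              rw [hBdef]; field_simp
            have m1 : (1-α)^2 * (A - 1) < (1-α)^2 * (n:ℝ) :=
              mul_lt_mul_of_pos_left hnA (by positivity)
            have m2 : (1-α) * (B - 1) < (1-α) * (n:ℝ) :=
              mul_lt_mul_of_pos_left hnB hp0
            nlinarith [sq_nonneg (1-α), mul_pos hp0 hp0]
        _ = ε/2 := Real.exp_log (half_pos hε0)
  -- membership of n in the lazy mixing set
  have hmem : ∀ i, dTV (fun j => (((α • (1 : Matrix (Fin d) (Fin d) ℝ) + (1-α) • M)) ^ n) i j) π ≤ ε := by
    intro i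
    have hrow : (fun j => (((α • (1 : Matrix (Fin d) (Fin d) ℝ) + (1-α) • M)) ^ n) i j)
        = fun j => ∑ k ∈ Finset.range (n+1), w k * (M ^ k) i j := by
      funext j
      rw [lazy_expand M α n i j]
    rw [hrow]
    have hmix := dTV_mix (Finset.range (n+1)) w (fun k j => (M ^ k) i j) π
      (fun k _ => hw0 k) hw1
    refine le_trans hmix ?_
    have hsplit := Finset.sum_filter_add_sum_filter_not (Finset.range (n+1)) (· < t₀)
      (fun k => w k * dTV (fun j => (M ^ k) i j) π)
    rw [← hsplit]
    have hb1 : ∑ k ∈ (Finset.range (n+1)).filter (· < t₀),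
        w k * dTV (fun j => (M ^ k) i j) π ≤ ε/2 := by
      calc ∑ k ∈ (Finset.range (n+1)).filter (· < t₀), w k * dTV (fun j => (M ^ k) i j) π
          ≤ ∑ k ∈ (Finset.range (n+1)).filter (· < t₀), w k := by
            refine Finset.sum_le_sum fun k _ => ?_
            have hd1 : dTV (fun j => (M ^ k) i j) π ≤ 1 :=
              dTV_le_one _ _ (fun j => pow_nonneg_entries M hM1 k i j)
                (pow_row_sum M hM2 k i) (fun j => (hπ0 j).le) hπ1
            calc w k * dTV (fun j => (M ^ k) i j) π ≤ w k * 1 :=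
                  mul_le_mul_of_nonneg_left hd1 (hw0 k)
              _ = w k := mul_one _
        _ ≤ ∑ k ∈ Finset.range t₀, w k := by
            refine Finset.sum_le_sum_of_subset_of_nonneg ?_ (fun k _ _ => hw0 k)
            intro k hk
            rw [Finset.mem_filter] at hk
            exact Finset.mem_range.2 (by exact_mod_cast hk.2)
        _ ≤ ε/2 := htail
    have hb2 : ∑ k ∈ (Finset.range (n+1)).filter (¬ · < t₀),
        w k * dTV (fun j => (M ^ k) i j) π ≤ ε/2 := by
      calc ∑ k ∈ (Finset.range (n+1)).filter (¬ · < t₀), w k * dTV (fun j => (M ^ k) i j) π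
          ≤ ∑ k ∈ (Finset.range (n+1)).filter (¬ · < t₀), w k * (ε/2) := by
            refine Finset.sum_le_sum fun k hk => ?_
            rw [Finset.mem_filter] at hk
            have : t₀ ≤ k := not_lt.1 (by exact_mod_cast hk.2)
            exact mul_le_mul_of_nonneg_left (hmono k this i) (hw0 k)
        _ ≤ ∑ k ∈ Finset.range (n+1), w k * (ε/2) := by
            refine Finset.sum_le_sum_of_subset_of_nonneg (Finset.filter_subset _ _)
              (fun k _ _ => mul_nonneg (hw0 k) (by linarith))
        _ = ε/2 := by rw [← Finset.sum_mul, hw1, one_mul]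
    linarith
  have hfinal : mixTime (α • 1 + (1 - α) • M) π ε ≤ n := Nat.sInf_le hmem
  calc (mixTime (α • 1 + (1 - α) • M) π ε : ℝ) ≤ (n:ℝ) := by exact_mod_cast hfinal
    _ ≤ mx := hnle
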